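/- arXiv:1108.3640 — 10 statements merged into one kernel-verified Lean document; each statement's English description precedes it below -/
import Mathlib

section
/- For any integer β ≥ 2, the set of (-β)-integers equals the set of rational integers: Z_{-β} = Z. -/
/-!
For an integer base `b`, each step of `T_{-b}` multiplies by `-b` and subtracts an integer, so
`T_{-b}^n y = (-b)^n y + m` with `m ∈ ℤ`. Hence `T_{-b}^n (x / (-b)^n) = 0` forces `x ∈ ℤ`.
Conversely, for `k ∈ ℤ` and `n` large, `y = k / (-b)^n` lies in the domain of `T_{-b}`, and
`T_{-b}^n y = k + m` is an integer in that domain, which contains no integer other than `0`.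
-/

/-- The `(-β)`-transformation `x ↦ -βx - ⌊β/(β+1) - βx⌋`. -/
noncomputable def Tm (β : ℝ) (x : ℝ) : ℝ := -β * x - ⌊β / (β + 1) - β * x⌋

/-- The set of `(-β)`-integers `Z_{-β} = ⋃_{n≥0} (-β)^n T_{-β}^{-n}(0)`. -/
noncomputable def Zm (β : ℝ) : Set ℝ :=
  {x | ∃ n : ℕ, x / (-β) ^ n ∈ Set.Ico (-β / (β + 1)) (1 / (β + 1)) ∧
    (Tm β)^[n] (x / (-β) ^ n) = 0}

open Set

noncomputable def negBetaDomain (β : ℝ) : Set ℝ := Ico (-β / (β + 1)) (1 / (β + 1))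

lemma Tm_mem_negBetaDomain {β : ℝ} (hβ : 0 < β + 1) (x : ℝ) : Tm β x ∈ negBetaDomain β := by
  have hsum : β / (β + 1) + 1 / (β + 1) = 1 := by field_simp
  have hfract : Tm β x = Int.fract (β / (β + 1) - β * x) - β / (β + 1) := by
    rw [Tm, Int.fract]; ring
  have h0 := Int.fract_nonneg (β / (β + 1) - β * x)
  have h1 := Int.fract_lt_one (β / (β + 1) - β * x)
  rw [negBetaDomain, hfract, neg_div]
  constructor <;> linarith

lemma mapsTo_Tm_iterate {β : ℝ} (hβ : 0 < β + 1) (n : ℕ) :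
    MapsTo (Tm β)^[n] (negBetaDomain β) (negBetaDomain β) :=
  MapsTo.iterate (fun x _ ↦ Tm_mem_negBetaDomain hβ x) n

lemma exists_Tm_intCast_iterate_eq (b : ℤ) (n : ℕ) (y : ℝ) :
    ∃ m : ℤ, (Tm b)^[n] y = (-b : ℝ) ^ n * y + m := by
  induction n with
  | zero => exact ⟨0, by simp⟩
  | succ n ih =>
    obtain ⟨m, hm⟩ := ih
    refine ⟨-b * m - ⌊(b : ℝ) / (b + 1) - b * (Tm b)^[n] y⌋, ?_⟩
    rw [Function.iterate_succ_apply', Tm, hm]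
    push_cast
    ring

lemma eq_zero_of_intCast_mem_negBetaDomain {β : ℝ} (hβ : 0 < β) {m : ℤ}
    (hm : (m : ℝ) ∈ negBetaDomain β) : m = 0 := by
  have hβ1 : 0 < β + 1 := by linarith
  have hlow : -1 < -β / (β + 1) := by
    rw [neg_div, neg_lt_neg_iff, div_lt_one hβ1]; linarith
  have hup : 1 / (β + 1) < 1 := by rw [div_lt_one hβ1]; linarith
  have hm_gt : -1 < m := by exact_mod_cast hlow.trans_le hm.1
  have hm_lt : m < 1 := by exact_mod_cast hm.2.trans hup
  omega

lemma mem_negBetaDomain_of_abs_lt {β : ℝ} (hβ : 1 ≤ β) {y : ℝ} (hy : |y| < 1 / (β + 1)) :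
    y ∈ negBetaDomain β := by
  have hβ1 : 0 < β + 1 := by linarith
  have hle : -β / (β + 1) ≤ -(1 / (β + 1)) := by
    rw [neg_div, neg_le_neg_iff]; gcongr
  exact ⟨hle.trans (abs_lt.mp hy).1.le, (abs_lt.mp hy).2⟩

lemma exists_abs_div_neg_pow_lt {β : ℝ} (hβ : 1 < β) (x : ℝ) {ε : ℝ} (hε : 0 < ε) :
    ∃ n : ℕ, |x / (-β) ^ n| < ε := by
  obtain ⟨n, hn⟩ := pow_unbounded_of_one_lt (|x| / ε) hβ
  refine ⟨n, ?_⟩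
  have hpow : 0 < β ^ n := by positivity
  rw [abs_div, abs_pow, abs_neg, abs_of_pos (by linarith : 0 < β), div_lt_iff₀ hpow]
  rwa [div_lt_iff₀ hε, mul_comm] at hn

lemma Zm_intCast_subset_range_intCast {b : ℤ} (hb : b ≠ 0) : Zm b ⊆ range ((↑) : ℤ → ℝ) := by
  rintro x ⟨n, -, hzero⟩
  obtain ⟨m, hm⟩ := exists_Tm_intCast_iterate_eq b n (x / (-b : ℝ) ^ n)
  have hpow : (-b : ℝ) ^ n ≠ 0 := pow_ne_zero _ (by exact_mod_cast neg_ne_zero.mpr hb)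
  rw [hzero, mul_div_cancel₀ _ hpow] at hm
  exact ⟨-m, by push_cast; linarith⟩

lemma range_intCast_subset_Zm_intCast {b : ℤ} (hb : 1 < b) : range ((↑) : ℤ → ℝ) ⊆ Zm b := by
  have hb1 : (1 : ℝ) < b := by exact_mod_cast hb
  rintro _ ⟨k, rfl⟩
  obtain ⟨n, hn⟩ := exists_abs_div_neg_pow_lt hb1 k (by positivity : (0 : ℝ) < 1 / (b + 1))
  have hy := mem_negBetaDomain_of_abs_lt hb1.le hn
  refine ⟨n, hy, ?_⟩
  obtain ⟨m, hm⟩ := exists_Tm_intCast_iterate_eq b n (k / (-b : ℝ) ^ n)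
  have hpow : (-b : ℝ) ^ n ≠ 0 := pow_ne_zero _ (by linarith)
  rw [mul_div_cancel₀ _ hpow] at hm
  have hint := mapsTo_Tm_iterate (by linarith) n hy
  rw [hm, ← Int.cast_add] at hint ⊢
  rw [eq_zero_of_intCast_mem_negBetaDomain (by linarith) hint, Int.cast_zero]

theorem stmt_0 (b : ℤ) (hb : 2 ≤ b) : Zm (b : ℝ) = Set.range ((↑·) : ℤ → ℝ) :=
  (Zm_intCast_subset_range_intCast (by omega)).antisymm (range_intCast_subset_Zm_intCast hb)
end

section
/- If 1 < β < (1+√5)/2, then the set of (-β)-integers is trivial: Z_{-β} = {0}. -/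
open Real goldenRatio

theorem sq_lt_add_one_of_lt_goldenRatio {β : ℝ} (h₀ : 0 ≤ β) (h : β < φ) : β ^ 2 < β + 1 := by
  have hfactor : β ^ 2 - β - 1 = (β - φ) * (β - ψ) := by
    linear_combination (-β) * goldenRatio_add_goldenConj - goldenRatio_mul_goldenConj
  nlinarith [goldenConj_neg]

theorem Tm_eq_fract_sub (β x : ℝ) :
    Tm β x = Int.fract (β / (β + 1) - β * x) - β / (β + 1) := by
  rw [Int.fract, Tm]
  ring

theorem Tm_mem_Ico {β : ℝ} (hβ : β + 1 ≠ 0) (x : ℝ) :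
    Tm β x ∈ Set.Ico (-β / (β + 1)) (1 / (β + 1)) := by
  have h₀ := Int.fract_nonneg (β / (β + 1) - β * x)
  have h₁ := Int.fract_lt_one (β / (β + 1) - β * x)
  have hsplit : 1 / (β + 1) = 1 - β / (β + 1) := by field_simp; ring
  rw [Tm_eq_fract_sub, neg_div, hsplit]
  constructor <;> linarith

theorem eq_zero_of_Tm_eq_zero {β y : ℝ} (hβ : 0 < β) (hsq : β ^ 2 < β + 1)
    (hy : y ∈ Set.Ico (-β / (β + 1)) (1 / (β + 1))) (h : Tm β y = 0) : y = 0 := by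
  set k := ⌊β / (β + 1) - β * y⌋
  have hk : (k : ℝ) = -β * y := by rw [Tm] at h; linarith
  have hβ1 : 0 < β + 1 := by linarith
  obtain ⟨hlo, hhi⟩ := hy
  rw [neg_div, neg_le, le_div_iff₀ hβ1] at hlo
  rw [lt_div_iff₀ hβ1] at hhi
  have hk_lt : (k : ℝ) < 1 := by nlinarith
  have hk_gt : (-1 : ℝ) < k := by nlinarith
  have hk0 : k = 0 := by
    have : k < 1 := by exact_mod_cast hk_lt
    have : -1 < k := by exact_mod_cast hk_gt
    omega
  rw [hk0, Int.cast_zero, eq_comm, neg_mul, neg_eq_zero, mul_eq_zero] at hk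
  exact hk.resolve_left hβ.ne'

theorem eq_zero_of_iterate_Tm_eq_zero {β : ℝ} (hβ : 0 < β) (hsq : β ^ 2 < β + 1) (n : ℕ) :
    ∀ y ∈ Set.Ico (-β / (β + 1)) (1 / (β + 1)), (Tm β)^[n] y = 0 → y = 0 := by
  induction n with
  | zero => exact fun y _ h => h
  | succ n ih =>
    intro y hy h
    rw [Function.iterate_succ_apply] at h
    exact eq_zero_of_Tm_eq_zero hβ hsq hy (ih _ (Tm_mem_Ico (by linarith) y) h)

theorem Zm_subset_singleton_zero {β : ℝ} (hβ : 0 < β) (hsq : β ^ 2 < β + 1) :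
    Zm β ⊆ {0} := by
  rintro x ⟨n, hmem, hiter⟩
  have hx := eq_zero_of_iterate_Tm_eq_zero hβ hsq n _ hmem hiter
  rwa [div_eq_zero_iff, or_iff_left (pow_ne_zero n (neg_ne_zero.mpr hβ.ne'))] at hx

theorem zero_mem_Zm {β : ℝ} (hβ : 0 ≤ β) : (0 : ℝ) ∈ Zm β :=
  ⟨0, by
    simp only [pow_zero, div_one, neg_div, Set.mem_Ico, neg_nonpos]
    exact ⟨by positivity, by positivity⟩, zero_div _⟩

theorem stmt_1 (β : ℝ) (hβ : 1 < β) (hβ' : β < (1 + Real.sqrt 5) / 2) :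
    Zm β = {0} := by
  have hβ₀ : 0 < β := by linarith
  have hsq : β ^ 2 < β + 1 := sq_lt_add_one_of_lt_goldenRatio hβ₀.le hβ'
  exact (Zm_subset_singleton_zero hβ₀ hsq).antisymm
    (Set.singleton_subset_iff.mpr (zero_mem_Zm hβ₀.le))
end

section
/- For every β > 1 and every x ∈ ℝ, there exists n ≥ 0 such that (-β)^{-n} x lies in the open interval (-β/(β+1), 1/(β+1)); moreover the value T_{-β}^n((-β)^{-n} x) is independent of the choice of such n, so the map ι_β(x) = T_{-β}^n((-β)^{-n} x) is well defined. -/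
/-!
On `[-β / (β + 1), 1 / (β + 1))` the floor in `T_{-β} (y / -β)` vanishes, so `T_{-β}` undoes division
by `-β`, and for `β ≥ 1` division by `-β` maps the open interval into itself. Hence once `x / (-β) ^ n`
lies in the interval, so does `x / (-β) ^ (n + k)`, and `T_{-β}^k` sends it back to `x / (-β) ^ n`;
this gives independence of `n`. Existence holds because `|x| / β ^ n → 0`.
-/

open Set

lemma Tm_div_neg {β y : ℝ} (hβ : β ≠ 0) (hβ1 : β + 1 ≠ 0)
    (hy : y ∈ Ico (-β / (β + 1)) (1 / (β + 1))) : Tm β (y / -β) = y := by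
  have hmul : β * (y / -β) = -y := by field_simp
  have hsum : β / (β + 1) + 1 / (β + 1) = 1 := by rw [← add_div, div_self hβ1]
  obtain ⟨h1, h2⟩ := hy
  rw [neg_div] at h1
  have hfloor : ⌊β / (β + 1) - β * (y / -β)⌋ = 0 := by
    rw [hmul, sub_neg_eq_add, Int.floor_eq_zero_iff]
    exact ⟨by linarith, by linarith⟩
  rw [Tm, hfloor, neg_mul, hmul]
  simp

lemma div_neg_mem_Ioo {β y : ℝ} (hβ : 1 ≤ β) (hy : y ∈ Ioo (-β / (β + 1)) (1 / (β + 1))) :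
    y / -β ∈ Ioo (-β / (β + 1)) (1 / (β + 1)) := by
  have hβ0 : 0 < β := by linarith
  obtain ⟨h1, h2⟩ := hy
  rw [div_lt_iff₀ (by linarith)] at h1
  rw [lt_div_iff₀ (by linarith)] at h2
  rw [div_neg, mem_Ioo, div_lt_iff₀ (by linarith), lt_div_iff₀ (by linarith), neg_mul,
    neg_lt_neg_iff, neg_lt, div_mul_eq_mul_div, lt_div_iff₀ hβ0, div_lt_iff₀ hβ0]
  constructor <;> nlinarith

lemma iterate_Tm_div_pow {β : ℝ} (hβ : 1 ≤ β) (k : ℕ) :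
    ∀ y ∈ Ioo (-β / (β + 1)) (1 / (β + 1)), (Tm β)^[k] (y / (-β) ^ k) = y := by
  induction k with
  | zero => simp
  | succ k ih =>
    intro y hy
    rw [pow_succ', ← div_div, Function.iterate_succ_apply',
      ih _ (div_neg_mem_Ioo hβ hy),
      Tm_div_neg (by positivity) (by positivity) (Ioo_subset_Ico_self hy)]

lemma iterate_Tm_add_div_pow {β x : ℝ} (hβ : 1 ≤ β) {n : ℕ}
    (hn : x / (-β) ^ n ∈ Ioo (-β / (β + 1)) (1 / (β + 1))) (k : ℕ) :
    (Tm β)^[n + k] (x / (-β) ^ (n + k)) = (Tm β)^[n] (x / (-β) ^ n) := by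
  rw [pow_add, ← div_div, Function.iterate_add_apply, iterate_Tm_div_pow hβ k _ hn]

lemma exists_div_pow_mem_Ioo {β : ℝ} (hβ : 1 < β) (x : ℝ) :
    ∃ n : ℕ, x / (-β) ^ n ∈ Ioo (-β / (β + 1)) (1 / (β + 1)) := by
  have hβ0 : 0 < β := by linarith
  obtain ⟨n, hn⟩ := pow_unbounded_of_one_lt (|x| * (β + 1)) hβ
  have habs : |x / (-β) ^ n| < 1 / (β + 1) := by
    rw [abs_div, abs_pow, abs_neg, abs_of_pos hβ0, div_lt_div_iff₀ (by positivity) (by linarith)]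
    linarith
  have hlower : -β / (β + 1) < -(1 / (β + 1)) := by
    rw [← neg_div, div_lt_div_iff_of_pos_right (by linarith)]
    linarith
  exact ⟨n, hlower.trans (neg_lt_of_abs_lt habs), lt_of_abs_lt habs⟩

theorem stmt_3 (β : ℝ) (hβ : 1 < β) (x : ℝ) :
    (∃ n : ℕ, x / (-β) ^ n ∈ Set.Ioo (-β / (β + 1)) (1 / (β + 1))) ∧
    ∀ n m : ℕ, x / (-β) ^ n ∈ Set.Ioo (-β / (β + 1)) (1 / (β + 1)) →
      x / (-β) ^ m ∈ Set.Ioo (-β / (β + 1)) (1 / (β + 1)) →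
      (Tm β)^[n] (x / (-β) ^ n) = (Tm β)^[m] (x / (-β) ^ m) := by
  refine ⟨exists_div_pow_mem_Ioo hβ x, fun n m hn hm => ?_⟩
  rcases le_total n m with h | h
  · obtain ⟨k, rfl⟩ := Nat.exists_eq_add_of_le h
    exact (iterate_Tm_add_div_pow hβ.le hn k).symm
  · obtain ⟨k, rfl⟩ := Nat.exists_eq_add_of_le h
    exact iterate_Tm_add_div_pow hβ.le hm k
end

section
/- For any β > 1, the set of (-β)-integers equals the preimage of 0 under ι_β: Z_{-β} = ι_β^{-1}(0). -/
/-!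
The two sets differ only by representations `x / (-β)^n = -β/(β+1)` at the left endpoint.
Such an `x` is also represented with `n + 2`: the point `x / (-β)^(n+2) = -β/(β+1) / β²` lies in
the open interval and `T_{-β}` maps it to `-β/(β+1)`, from which `n` more steps reach the fixed
point `0`.
-/

namespace Tm

variable {β : ℝ}

theorem apply_zero (hβ : 0 ≤ β) : Tm β 0 = 0 := by
  have hβ1 : 0 < β + 1 := by linarith
  have hfloor : ⌊β / (β + 1)⌋ = 0 :=
    Int.floor_eq_zero_iff.mpr ⟨by positivity, (div_lt_one hβ1).mpr (by linarith)⟩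
  simp [Tm, hfloor]

theorem iterate_eq_zero_of_eq_zero {n : ℕ} {y : ℝ} (hβ : 0 ≤ β) (hy : (Tm β)^[n] y = 0) :
    (Tm β)^[n + 1] y = 0 := by
  rw [Function.iterate_succ_apply', hy, apply_zero hβ]

theorem apply_left_endpoint_div_sq (hβ : β ≠ 0) (hβ1 : β + 1 ≠ 0) :
    Tm β (-β / (β + 1) / β ^ 2) = -β / (β + 1) := by
  have harg : β / (β + 1) - β * (-β / (β + 1) / β ^ 2) = 1 := by
    field_simp
    ring
  rw [Tm, harg, Int.floor_one, Int.cast_one]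
  field_simp
  ring

end Tm

theorem left_endpoint_div_sq_mem_Ioo {β : ℝ} (hβ : 1 < β) :
    -β / (β + 1) / β ^ 2 ∈ Set.Ioo (-β / (β + 1)) (1 / (β + 1)) := by
  have hβ1 : 0 < β + 1 := by linarith
  have hsq : 1 < β ^ 2 := by nlinarith
  have hend : 0 < β / (β + 1) := by positivity
  have hdiv : -β / (β + 1) / β ^ 2 = -(β / (β + 1) / β ^ 2) := by ring
  refine ⟨?_, ?_⟩
  · rw [hdiv, neg_div, neg_lt_neg_iff]
    exact div_lt_self hend hsq
  · rw [hdiv]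
    have : 0 < β / (β + 1) / β ^ 2 := by positivity
    have : 0 < 1 / (β + 1) := by positivity
    linarith

theorem stmt_4 (β : ℝ) (hβ : 1 < β) :
    Zm β = {x : ℝ | ∃ n : ℕ, x / (-β) ^ n ∈ Set.Ioo (-β / (β + 1)) (1 / (β + 1)) ∧
      (Tm β)^[n] (x / (-β) ^ n) = 0} := by
  ext x
  refine ⟨?_, fun ⟨n, hmem, hit⟩ => ⟨n, Set.Ioo_subset_Ico_self hmem, hit⟩⟩
  rintro ⟨n, hmem, hit⟩
  obtain ⟨y, hy⟩ : ∃ y, x / (-β) ^ n = y := ⟨_, rfl⟩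
  rw [hy] at hmem hit
  rcases hmem.1.eq_or_lt with rfl | hlt
  · have hshift : x / (-β) ^ (n + 2) = -β / (β + 1) / β ^ 2 := by
      rw [pow_add, ← div_div, hy, neg_sq]
    refine ⟨n + 2, ?_, ?_⟩
    · rw [hshift]
      exact left_endpoint_div_sq_mem_Ioo hβ
    · rw [hshift, Function.iterate_succ_apply,
        Tm.apply_left_endpoint_div_sq (by positivity) (by positivity)]
      exact Tm.iterate_eq_zero_of_eq_zero (by positivity) hit
  · exact ⟨n, hy ▸ ⟨hlt, hmem.2⟩, hy ▸ hit⟩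
end

section
/- A real number x is a (-β)-integer if and only if x = Σ_{k=0}^{n-1} d_k (-β)^k for some n ≥ 0 and integers d_0, …, d_{n-1} satisfying -β/(β+1) ≤ Σ_{k=0}^{m-1} d_k (-β)^{k-m} < 1/(β+1) for all 1 ≤ m ≤ n. -/
open Finset

def negBetaInterval (β : ℝ) : Set ℝ := Set.Ico (-β / (β + 1)) (1 / (β + 1))

noncomputable def digitFrac (β : ℝ) (d : ℕ → ℤ) (m : ℕ) : ℝ :=
  ∑ k ∈ range m, (d k : ℝ) * (-β) ^ ((k : ℤ) - m)

section

variable {β : ℝ}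

lemma mem_negBetaInterval_iff (hβ : β + 1 ≠ 0) {y : ℝ} :
    y ∈ negBetaInterval β ↔ 0 ≤ y + β / (β + 1) ∧ y + β / (β + 1) < 1 := by
  have h : 1 / (β + 1) = 1 - β / (β + 1) := by field_simp; ring
  rw [negBetaInterval, Set.mem_Ico, h, neg_div]
  constructor <;> rintro ⟨h₁, h₂⟩ <;> constructor <;> linarith

lemma Tm_eq_fract (y : ℝ) : Tm β y = Int.fract (β / (β + 1) - β * y) - β / (β + 1) := by
  rw [Tm, Int.fract]
  ring

lemma Tm_mem_negBetaInterval (hβ : β + 1 ≠ 0) (y : ℝ) : Tm β y ∈ negBetaInterval β := by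
  rw [mem_negBetaInterval_iff hβ, Tm_eq_fract, sub_add_cancel]
  exact ⟨Int.fract_nonneg _, Int.fract_lt_one _⟩

lemma Tm_eq_of_mem (hβ : β + 1 ≠ 0) {s y : ℝ} {e : ℤ} (hy : y ∈ negBetaInterval β)
    (h : -β * s = y + e) : Tm β s = y := by
  rw [mem_negBetaInterval_iff hβ] at hy
  have hfloor : ⌊β / (β + 1) - β * s⌋ = e := by
    rw [Int.floor_eq_iff]
    constructor <;> linarith
  rw [Tm, hfloor]
  linarith

lemma digitFrac_zero (d : ℕ → ℤ) : digitFrac β d 0 = 0 := by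
  simp [digitFrac]

lemma digitFrac_congr {d d' : ℕ → ℤ} {m : ℕ} (h : ∀ k < m, d k = d' k) :
    digitFrac β d m = digitFrac β d' m :=
  sum_congr rfl fun k hk => by rw [h k (mem_range.mp hk)]

lemma digitFrac_eq_div (hβ : β ≠ 0) (d : ℕ → ℤ) (m : ℕ) :
    digitFrac β d m = (∑ k ∈ range m, (d k : ℝ) * (-β) ^ k) / (-β) ^ m := by
  rw [digitFrac, sum_div]
  refine sum_congr rfl fun k _ => ?_
  rw [zpow_sub₀ (neg_ne_zero.mpr hβ), zpow_natCast, zpow_natCast, mul_div_assoc]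

lemma neg_mul_digitFrac_succ (hβ : β ≠ 0) (d : ℕ → ℤ) (m : ℕ) :
    -β * digitFrac β d (m + 1) = digitFrac β d m + d m := by
  have hpow : (-β) ^ m ≠ 0 := pow_ne_zero m (neg_ne_zero.mpr hβ)
  rw [digitFrac_eq_div hβ, digitFrac_eq_div hβ, sum_range_succ, pow_succ]
  field_simp

lemma Tm_digitFrac_succ (hβ : β ≠ 0) (hβ' : β + 1 ≠ 0) {d : ℕ → ℤ} {m : ℕ}
    (hm : digitFrac β d m ∈ negBetaInterval β) :
    Tm β (digitFrac β d (m + 1)) = digitFrac β d m :=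
  Tm_eq_of_mem hβ' hm (neg_mul_digitFrac_succ hβ d m)

lemma iterate_Tm_digitFrac (hβ : β ≠ 0) (hβ' : β + 1 ≠ 0) {d : ℕ → ℤ} {n : ℕ}
    (hd : ∀ m < n, digitFrac β d m ∈ negBetaInterval β) :
    (Tm β)^[n] (digitFrac β d n) = 0 := by
  induction n with
  | zero => exact digitFrac_zero d
  | succ n ih =>
    rw [Function.iterate_succ_apply, Tm_digitFrac_succ hβ hβ' (hd n n.lt_succ_self)]
    exact ih fun m hm => hd m (hm.trans n.lt_succ_self)

lemma exists_digitFrac_of_iterate_Tm_eq_zero (hβ : β ≠ 0) (hβ' : β + 1 ≠ 0) {n : ℕ} {y : ℝ}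
    (hy : y ∈ negBetaInterval β) (h : (Tm β)^[n] y = 0) :
    ∃ d : ℕ → ℤ, y = digitFrac β d n ∧ ∀ m ≤ n, digitFrac β d m ∈ negBetaInterval β := by
  induction n generalizing y with
  | zero =>
    refine ⟨0, h.trans (digitFrac_zero 0).symm, fun m hm => ?_⟩
    rwa [Nat.le_zero.mp hm, digitFrac_zero, ← h]
  | succ n ih =>
    obtain ⟨d, hd, hdI⟩ := ih (Tm_mem_negBetaInterval hβ' y) h
    -- the new leading digit is the integer part that `Tm` discards at `y`
    set e := ⌊β / (β + 1) - β * y⌋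
    let d' : ℕ → ℤ := fun k => if k < n then d k else e
    have hprefix : ∀ m ≤ n, digitFrac β d' m = digitFrac β d m := fun m hm =>
      digitFrac_congr fun k hk => if_pos (hk.trans_le hm)
    have hlast : digitFrac β d' (n + 1) = y := by
      have hrec := neg_mul_digitFrac_succ hβ d' n
      rw [hprefix n le_rfl, ← hd, Tm] at hrec
      simp only [d', lt_irrefl, if_false] at hrec
      exact mul_left_cancel₀ (neg_ne_zero.mpr hβ) (by rw [hrec]; ring)
    refine ⟨d', hlast.symm, fun m hm => ?_⟩
    obtain hm | rfl := Nat.le_succ_iff.mp hm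
    · rw [hprefix m hm]
      exact hdI m hm
    · rwa [hlast]

end

theorem stmt_9 (β : ℝ) (hβ : 1 < β) (x : ℝ) :
    x ∈ Zm β ↔ ∃ (n : ℕ) (d : ℕ → ℤ),
      x = ∑ k ∈ Finset.range n, (d k : ℝ) * (-β) ^ k ∧
      ∀ m, 1 ≤ m → m ≤ n →
        -β / (β + 1) ≤ ∑ k ∈ Finset.range m, (d k : ℝ) * (-β) ^ ((k : ℤ) - m) ∧
        ∑ k ∈ Finset.range m, (d k : ℝ) * (-β) ^ ((k : ℤ) - m) < 1 / (β + 1) := by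
  have hβ0 : β ≠ 0 := by positivity
  have hβ1 : β + 1 ≠ 0 := by positivity
  have hzero : (0 : ℝ) ∈ negBetaInterval β :=
    ⟨div_nonpos_of_nonpos_of_nonneg (by linarith) (by linarith), by positivity⟩
  constructor
  · rintro ⟨n, hmem, hiter⟩
    obtain ⟨d, hd, hdI⟩ := exists_digitFrac_of_iterate_Tm_eq_zero hβ0 hβ1 hmem hiter
    have hpow : (-β) ^ n ≠ 0 := pow_ne_zero n (neg_ne_zero.mpr hβ0)
    refine ⟨n, d, ?_, fun m _ hm => hdI m hm⟩
    rw [← div_mul_cancel₀ x hpow, hd, digitFrac_eq_div hβ0, div_mul_cancel₀ _ hpow]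
  · rintro ⟨n, d, rfl, hbound⟩
    have hI : ∀ m ≤ n, digitFrac β d m ∈ negBetaInterval β := by
      rintro (_ | m) hm
      · rwa [digitFrac_zero]
      · exact hbound (m + 1) m.succ_pos hm
    have hval := (digitFrac_eq_div hβ0 d n).symm
    exact ⟨n, hval ▸ hI n le_rfl, hval ▸ iterate_Tm_digitFrac hβ0 hβ1 fun m hm => hI m hm.le⟩
end

section
/- Let a_1 a_2 ⋯ be a sequence of non-negative integers with a_1 ≥ 2, satisfying a_{n+1} a_{n+2} ⋯ ≤_alt a_1 a_2 ⋯ for all n ≥ 1, and additionally a_{n+1} a_{n+2} ⋯ <'_alt a_1 a_2 ⋯ for all n ≥ 2 with a_n = 0 (where x <'_alt y means there is m ≥ 0 with x_1⋯x_m = y_1⋯y_m and (-1)^m (x_{m+1} - y_{m+1}) < -1). Let β be the unique real in [a_1, a_1+1] with Σ_{k=1}^∞ a_k/(-β)^k = -β/(β+1) and -β/(β+1) ≤ Σ_{k=1}^∞ a_{n+k}/(-β)^k ≤ 1/(β+1) for all n. Then the strict inequality Σ_{k=1}^∞ a_{n+k}/(-β)^k < 1/(β+1) holds for all n ≥ 1,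 i.e., a_1 a_2 ⋯ is the (-β)-expansion of -β/(β+1). -/
/-!
Let `t n` be the tail sums, all lying in the interval `[-β/(β+1), 1/(β+1)]` of length one; they
satisfy `t (n+1) = -β t n - a (n+1)`. If `t n = 1/(β+1)`, the recursion forces `a (n+1) = 0` and
`t (n+1) = t 0`. The tails starting at `n+1` and at `0` then agree as long as the digits do, so the
first differing digits, which by the `<'_alt` hypothesis differ by at least two, differ by the
difference of two points of the interval, which is at most one.
-/

/-- Alternate order (strict), on sequences indexed from 1:
`x <_alt y` iff `x_1 ⋯ x_m = y_1 ⋯ y_m` and `(-1)^m (x_{m+1} - y_{m+1}) < 0` for some `m ≥ 0`. -/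
def AltLt (x y : ℕ → ℕ) : Prop :=
  ∃ m : ℕ, (∀ i, 1 ≤ i → i ≤ m → x i = y i) ∧ (-1 : ℤ) ^ m * ((x (m + 1) : ℤ) - y (m + 1)) < 0

/-- Alternate order (non-strict). -/
def AltLe (x y : ℕ → ℕ) : Prop := AltLt x y ∨ ∀ i, 1 ≤ i → x i = y i

/-- The relation `<'_alt`: `x_1 ⋯ x_m = y_1 ⋯ y_m` and `(-1)^m (x_{m+1} - y_{m+1}) < -1`. -/
def AltLt' (x y : ℕ → ℕ) : Prop :=
  ∃ m : ℕ, (∀ i, 1 ≤ i → i ≤ m → x i = y i) ∧ (-1 : ℤ) ^ m * ((x (m + 1) : ℤ) - y (m + 1)) < -1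

open Set

section TailRecurrence

variable {x t : ℕ → ℝ} {q : ℝ}

theorem tail_succ_of_hasSum (hq : q ≠ 0)
    (ht : ∀ n, HasSum (fun k => x (n + k + 1) / q ^ (k + 1)) (t n)) (n : ℕ) :
    t (n + 1) = q * t n - x (n + 1) := by
  have hshift := (hasSum_nat_add_iff' 1).mpr (ht n)
  have hscaled := (ht (n + 1)).div_const q
  have hfun : (fun k => x (n + (k + 1) + 1) / q ^ (k + 1 + 1))
      = fun k => x (n + 1 + k + 1) / q ^ (k + 1) / q := by
    funext k
    rw [show n + (k + 1) + 1 = n + 1 + k + 1 by omega, pow_succ, div_div]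
  rw [hfun] at hshift
  have h := hscaled.unique hshift
  simp only [Finset.range_one, Finset.sum_singleton, zero_add, pow_one, add_zero] at h
  field_simp at h
  linarith

variable (hrec : ∀ n, t (n + 1) = q * t n - x (n + 1))
include hrec

theorem tail_add_eq_of_digits_eq {i j m : ℕ} (hij : t i = t j)
    (hx : ∀ k, 1 ≤ k → k ≤ m → x (i + k) = x (j + k)) : t (i + m) = t (j + m) := by
  induction m with
  | zero => exact hij
  | succ m ih =>
    rw [← add_assoc, ← add_assoc, hrec, hrec, ih fun k hk hkm => hx k hk (by omega),
      add_assoc, add_assoc, hx (m + 1) (by omega) le_rfl]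

theorem abs_digit_sub_le_one {L : ℝ} (hL : ∀ n, t n ∈ Icc L (L + 1)) {i j m : ℕ}
    (hij : t i = t j) (hx : ∀ k, 1 ≤ k → k ≤ m → x (i + k) = x (j + k)) :
    |x (i + m + 1) - x (j + m + 1)| ≤ 1 := by
  have hdiff : x (i + m + 1) - x (j + m + 1) = t (j + m + 1) - t (i + m + 1) := by
    rw [hrec, hrec, tail_add_eq_of_digits_eq hrec hij hx]
    ring
  obtain ⟨hiL, hiR⟩ := hL (i + m + 1)
  obtain ⟨hjL, hjR⟩ := hL (j + m + 1)
  rw [hdiff, abs_sub_le_iff]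
  constructor <;> linarith

end TailRecurrence

theorem one_lt_abs_of_neg_one_pow_mul_lt {m : ℕ} {d : ℤ} (h : (-1) ^ m * d < -1) : 1 < |d| := by
  have habs : |(-1) ^ m * d| = |d| := by rw [abs_mul, abs_pow, abs_neg, abs_one, one_pow, one_mul]
  rw [← habs]
  exact lt_abs.mpr (Or.inr (by omega))

theorem stmt_11_general (a : ℕ → ℕ) (ha1 : 2 ≤ a 1)
    (halt' : ∀ n, 2 ≤ n → a n = 0 → AltLt' (fun k => a (n + k)) a)
    (β : ℝ) (hβl : (a 1 : ℝ) ≤ β)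
    (hsum : HasSum (fun k : ℕ => (a (k + 1) : ℝ) / (-β) ^ (k + 1)) (-β / (β + 1)))
    (hsums : ∀ n, 1 ≤ n → ∃ s : ℝ,
      HasSum (fun k : ℕ => (a (n + k + 1) : ℝ) / (-β) ^ (k + 1)) s ∧
      -β / (β + 1) ≤ s ∧ s ≤ 1 / (β + 1)) :
    ∀ n, 1 ≤ n → ∀ s : ℝ,
      HasSum (fun k : ℕ => (a (n + k + 1) : ℝ) / (-β) ^ (k + 1)) s →
      s < 1 / (β + 1) := by
  intro n hn s hs
  have hβ : 0 < β := by linarith [show (2 : ℝ) ≤ a 1 by exact_mod_cast ha1]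
  have hR : 1 / (β + 1) = -β / (β + 1) + 1 := by field_simp; ring
  have htails : ∀ n, ∃ s, HasSum (fun k => (a (n + k + 1) : ℝ) / (-β) ^ (k + 1)) s ∧
      s ∈ Icc (-β / (β + 1)) (-β / (β + 1) + 1) := by
    rintro (_ | n)
    · exact ⟨_, by simpa using hsum, le_rfl, by linarith⟩
    · obtain ⟨s, hs, hsL, hsR⟩ := hsums (n + 1) (by omega)
      exact ⟨s, hs, hsL, hR ▸ hsR⟩
  choose t ht hmem using htails
  have hrec := tail_succ_of_hasSum (x := fun k => (a k : ℝ)) (neg_ne_zero.mpr hβ.ne') ht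
  have ht0 : t 0 = -β / (β + 1) := (ht 0).unique (by simpa using hsum)
  by_contra! hge
  have htn : t n = 1 / (β + 1) := le_antisymm (hR ▸ (hmem n).2) (hs.unique (ht n) ▸ hge)
  have hstep : t (n + 1) = -β / (β + 1) - a (n + 1) := by rw [hrec, htn]; ring
  have hdigit : (a (n + 1) : ℝ) = 0 :=
    le_antisymm (by linarith [(hmem (n + 1)).1]) (Nat.cast_nonneg _)
  obtain ⟨m, hm, hd⟩ := halt' (n + 1) (by omega) (by exact_mod_cast hdigit)
  have hclose := abs_digit_sub_le_one (x := fun k => (a k : ℝ)) hrec hmem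
    (i := n + 1) (j := 0) (m := m)
    (by rw [hstep, hdigit, ht0, sub_zero]) fun k _ _ => by simp [hm k ‹_› ‹_›]
  have hfar := one_lt_abs_of_neg_one_pow_mul_lt hd
  simp only [zero_add] at hclose
  exact absurd hclose (not_le.mpr (by exact_mod_cast hfar))

theorem stmt_11 (a : ℕ → ℕ) (ha1 : 2 ≤ a 1)
    (halt : ∀ n, 1 ≤ n → AltLe (fun k => a (n + k)) a)
    (halt' : ∀ n, 2 ≤ n → a n = 0 → AltLt' (fun k => a (n + k)) a)
    (β : ℝ) (hβl : (a 1 : ℝ) ≤ β) (hβr : β ≤ (a 1 : ℝ) + 1)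
    (hsum : HasSum (fun k : ℕ => (a (k + 1) : ℝ) / (-β) ^ (k + 1)) (-β / (β + 1)))
    (hsums : ∀ n, 1 ≤ n → ∃ s : ℝ,
      HasSum (fun k : ℕ => (a (n + k + 1) : ℝ) / (-β) ^ (k + 1)) s ∧
      -β / (β + 1) ≤ s ∧ s ≤ 1 / (β + 1)) :
    ∀ n, 1 ≤ n → ∀ s : ℝ,
      HasSum (fun k : ℕ => (a (n + k + 1) : ℝ) / (-β) ^ (k + 1)) s →
      s < 1 / (β + 1) :=
  stmt_11_general a ha1 halt' β hβl hsum hsums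
end

section
/- The sequence a_1 a_2 ⋯ = 2 (10)^ω (i.e., a_1 = 2, a_{2k} = 1, a_{2k+1} = 0 for k ≥ 1) satisfies a_{n+1} a_{n+2} ⋯ ≤_alt a_1 a_2 ⋯ for all n ≥ 1 and Σ_{k=1}^∞ a_k/(-2)^k = -2/3, yet Σ_{k=1}^∞ a_{k+2}/(-2)^k = 1/3 = 1/(2+1), so a_1 a_2 ⋯ is not the (-2)-expansion of -2/3; the (-2)-expansion of -2/3 is 2^ω. -/
/-! The tail `a₃ a₄ ⋯ = (01)^ω` has value `Σ_{j≥1} 4^{-j} = 1/3`, the excluded right endpoint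
`1/(β+1)` of the digit interval, so the tail condition of a `(-2)`-expansion fails at `n = 2`;
peeling off the first two digits gives `2/(-2) + 1/4 + (1/4)(1/3) = -2/3`. Every tail of the
sequence starts with a digit `≤ 1 < 2 = a₁`, which settles the alternate-order comparison at the
first position. Finally, for an integer base `d` the left endpoint `-d/(d+1)` is a fixed point of
`T_{-d}` with digit `d`, so the genuine expansion is `d^ω`. -/

lemma altLt_of_apply_one_lt {x y : ℕ → ℕ} (h : x 1 < y 1) : AltLt x y :=
  ⟨0, fun _ _ h₀ => absurd h₀ (by omega), by simp; omega⟩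

lemma hasSum_geometric_succ_of_lt_one {r : ℝ} (h₀ : 0 ≤ r) (h₁ : r < 1) :
    HasSum (fun n : ℕ => r ^ (n + 1)) (r / (1 - r)) := by
  simpa [pow_succ', div_eq_mul_inv] using (hasSum_geometric_of_lt_one h₀ h₁).mul_left r

section PeriodicTail

variable {a : ℕ → ℕ}

lemma apply_le_one_of_two_le (haeven : ∀ k, 1 ≤ k → a (2 * k) = 1)
    (haodd : ∀ k, 1 ≤ k → a (2 * k + 1) = 0) {m : ℕ} (hm : 2 ≤ m) : a m ≤ 1 := by
  obtain ⟨k, rfl | rfl⟩ := Nat.even_or_odd' m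
  · exact (haeven k (by omega)).le
  · exact (haodd k (by omega)).trans_le zero_le_one

lemma hasSum_tail_from_three (haeven : ∀ k, 1 ≤ k → a (2 * k) = 1)
    (haodd : ∀ k, 1 ≤ k → a (2 * k + 1) = 0) :
    HasSum (fun k : ℕ => (a (k + 3) : ℝ) / (-2 : ℝ) ^ (k + 1)) (1 / 3) := by
  have hzero : HasSum (fun j : ℕ => (a (2 * j + 3) : ℝ) / (-2 : ℝ) ^ (2 * j + 1)) 0 := by
    convert hasSum_zero with j
    rw [show 2 * j + 3 = 2 * (j + 1) + 1 by ring, haodd (j + 1) (by omega)]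
    simp
  have hquarter : HasSum (fun j : ℕ => (a (2 * j + 1 + 3) : ℝ) / (-2 : ℝ) ^ (2 * j + 1 + 1))
      (1 / 3) := by
    convert hasSum_geometric_succ_of_lt_one (r := 1 / 4) (by norm_num) (by norm_num) using 1
    · ext j
      rw [show 2 * j + 1 + 3 = 2 * (j + 2) by ring, haeven (j + 2) (by omega),
        show 2 * j + 1 + 1 = 2 * (j + 1) by ring, pow_mul]
      norm_num [one_div_pow, one_div]
    · norm_num
  simpa only [zero_add] using HasSum.even_add_odd
    (f := fun k : ℕ => (a (k + 3) : ℝ) / (-2 : ℝ) ^ (k + 1)) hzero hquarter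

lemma hasSum_expansion_eq_neg_two_thirds (ha1 : a 1 = 2) (haeven : ∀ k, 1 ≤ k → a (2 * k) = 1)
    (haodd : ∀ k, 1 ≤ k → a (2 * k + 1) = 0) :
    HasSum (fun k : ℕ => (a (k + 1) : ℝ) / (-2 : ℝ) ^ (k + 1)) (-2 / 3) := by
  have hshift : ∀ k : ℕ, (a (k + 2 + 1) : ℝ) / (-2 : ℝ) ^ (k + 2 + 1)
      = (a (k + 3) : ℝ) / (-2 : ℝ) ^ (k + 1) / 4 := fun k => by
    rw [pow_succ _ (k + 2), pow_succ _ (k + 1)]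
    ring
  have hhead :
      -2 / 3 - ∑ i ∈ Finset.range 2, (a (i + 1) : ℝ) / (-2 : ℝ) ^ (i + 1) = 1 / 3 / 4 := by
    simp [Finset.sum_range_succ, ha1, haeven 1 le_rfl]
    norm_num
  rw [← hasSum_nat_add_iff' 2, hhead]
  simpa only [hshift] using (hasSum_tail_from_three haeven haodd).div_const 4

end PeriodicTail

lemma natCast_div_add_one_sub_mul_neg_div (d : ℕ) :
    (d : ℝ) / (d + 1) - d * (-d / (d + 1)) = d := by
  field_simp
  ring

lemma Tm_natCast_neg_div_add_one (d : ℕ) : Tm d (-d / (d + 1)) = -d / (d + 1) := by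
  rw [Tm, natCast_div_add_one_sub_mul_neg_div, Int.floor_natCast]
  field_simp
  push_cast
  ring

theorem stmt_12 (a : ℕ → ℕ) (ha1 : a 1 = 2)
    (haeven : ∀ k, 1 ≤ k → a (2 * k) = 1) (haodd : ∀ k, 1 ≤ k → a (2 * k + 1) = 0) :
    (∀ n, 1 ≤ n → AltLe (fun k => a (n + k)) a) ∧
    HasSum (fun k : ℕ => (a (k + 1) : ℝ) / (-2 : ℝ) ^ (k + 1)) (-2 / 3) ∧
    HasSum (fun k : ℕ => (a (k + 3) : ℝ) / (-2 : ℝ) ^ (k + 1)) (1 / 3) ∧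
    (1 : ℝ) / 3 = 1 / (2 + 1) ∧
    (∀ n : ℕ, ⌊(2 : ℝ) / (2 + 1) - 2 * (Tm 2)^[n] (-2 / (2 + 1))⌋ = 2) := by
  refine ⟨fun n hn => Or.inl (altLt_of_apply_one_lt ?_),
    hasSum_expansion_eq_neg_two_thirds ha1 haeven haodd, hasSum_tail_from_three haeven haodd,
    by norm_num, fun n => ?_⟩
  · have := apply_le_one_of_two_le haeven haodd (m := n + 1) (by omega)
    simp only [ha1]
    omega
  · have hfix := Function.iterate_fixed (Tm_natCast_neg_div_add_one 2) n
    have hdigit := congrArg Int.floor (natCast_div_add_one_sub_mul_neg_div 2)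
    rw [← hfix, Int.floor_natCast] at hdigit
    exact_mod_cast hdigit
end

section
/- If β ≥ (1+√5)/2, then with a_1 = ⌊β/(β+1) + β²/(β+1)⌋ = ⌊-t_0 - β t_0⌋ and t_1 = T_{-β}(-β/(β+1)), one has: a_1 = 1 and t_1 ≥ 0, or a_1 ≥ 2. -/
/-!
Since `β/(β+1) + β²/(β+1) = β`, the digit `a₁` is `⌊β⌋`, which is `≥ 2` unless `φ ≤ β < 2`.
In that case `a₁ = 1` and `t₁ = β²/(β+1) - 1`, which is nonnegative because `β² ≥ β + 1`
for `β ≥ φ`.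
-/

open Real goldenRatio

lemma add_one_le_sq_of_goldenRatio_le {β : ℝ} (hβ : φ ≤ β) : β + 1 ≤ β ^ 2 := by
  have hfactor : β ^ 2 - β - 1 = (β - φ) * (β + φ - 1) := by
    linear_combination goldenRatio_sq
  nlinarith [one_lt_goldenRatio]

lemma div_add_one_add_sq_div_add_one {β : ℝ} (hβ : β + 1 ≠ 0) :
    β / (β + 1) + β ^ 2 / (β + 1) = β := by
  field_simp
  ring

lemma Tm_neg_div_add_one {β : ℝ} (hβ : β + 1 ≠ 0) :
    Tm β (-β / (β + 1)) = β ^ 2 / (β + 1) - ⌊β⌋ := by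
  have hmul : -β * (-β / (β + 1)) = β ^ 2 / (β + 1) := by ring
  have harg : β / (β + 1) - β * (-β / (β + 1)) = β := by
    rw [sub_eq_add_neg, ← neg_mul, hmul, div_add_one_add_sq_div_add_one hβ]
  rw [Tm, harg, hmul]

theorem stmt_13 (β : ℝ) (hβ : (1 + Real.sqrt 5) / 2 ≤ β) :
    (⌊β / (β + 1) + β ^ 2 / (β + 1)⌋ = 1 ∧ 0 ≤ Tm β (-β / (β + 1))) ∨
    2 ≤ ⌊β / (β + 1) + β ^ 2 / (β + 1)⌋ := by
  have hφ : φ ≤ β := hβ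
  have hpos : 0 < β + 1 := by linarith [goldenRatio_pos]
  rw [div_add_one_add_sq_div_add_one hpos.ne', Tm_neg_div_add_one hpos.ne']
  rcases le_or_gt 2 β with h2 | h2
  · exact Or.inr (Int.le_floor.mpr (by exact_mod_cast h2))
  · have hfloor : ⌊β⌋ = 1 := by
      rw [Int.floor_eq_iff]
      constructor <;> push_cast <;> linarith [one_lt_goldenRatio]
    have hsq : 1 ≤ β ^ 2 / (β + 1) :=
      (one_le_div hpos).mpr (add_one_le_sq_of_goldenRatio_le hφ)
    refine Or.inl ⟨hfloor, ?_⟩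
    rw [hfloor, Int.cast_one]
    linarith
end

section
/- Let a_1 a_2 ⋯ = 3 0 1 0³ 1 0⁵ 1 ⋯, i.e., a_1 = 3 and for each k ≥ 1 the block following position k(k-1)+1 is 0^{2k-1} 1 (so a_{k(k-1)+2} ⋯ a_{k(k+1)+1} = 0^{2k-1} 1). Then this sequence satisfies a_{n+1} a_{n+2} ⋯ ≤_alt a_1 a_2 ⋯ for all n ≥ 1, and a_{n+1} a_{n+2} ⋯ <'_alt a_1 a_2 ⋯ for all n ≥ 2 with a_n = 0. -/
/-
The first letter decides both comparisons: `a 1 = 3`, while every later letter is `0` or `1`,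
because the blocks `a (k(k-1)+2) ⋯ a (k(k+1)+1) = 0^{2k-1} 1`, `k ≥ 1`, tile all positions `≥ 2`.
-/

theorem AltLt'.altLt {x y : ℕ → ℕ} (h : AltLt' x y) : AltLt x y :=
  let ⟨m, hpre, hm⟩ := h
  ⟨m, hpre, by omega⟩

theorem altLt'_of_add_two_le {x y : ℕ → ℕ} (h : x 1 + 2 ≤ y 1) : AltLt' x y :=
  ⟨0, by omega, by simp only [pow_zero, one_mul, zero_add]; omega⟩

theorem exists_mem_block {m : ℕ} (hm : 2 ≤ m) :
    ∃ k, 1 ≤ k ∧ k * (k - 1) + 2 ≤ m ∧ m ≤ k * (k + 1) + 1 := by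
  induction m, hm using Nat.le_induction with
  | base => exact ⟨1, by norm_num⟩
  | succ m _ ih =>
    obtain ⟨k, hk, hlo, hhi⟩ := ih
    rcases hhi.eq_or_lt with hend | hlt
    · refine ⟨k + 1, by omega, ?_, by nlinarith⟩
      rw [Nat.add_sub_cancel, mul_comm]
      omega
    · exact ⟨k, hk, by omega, by omega⟩

theorem le_one_of_blocks {a : ℕ → ℕ}
    (hblock0 : ∀ k, 1 ≤ k → ∀ j, 1 ≤ j → j ≤ 2 * k - 1 → a (k * (k - 1) + 1 + j) = 0)
    (hblock1 : ∀ k, 1 ≤ k → a (k * (k + 1) + 1) = 1) {m : ℕ} (hm : 2 ≤ m) : a m ≤ 1 := by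
  obtain ⟨k, hk, hlo, hhi⟩ := exists_mem_block hm
  rcases hhi.eq_or_lt with rfl | hlt
  · exact (hblock1 k hk).le
  · have hlen : k * (k + 1) = k * (k - 1) + 2 * k := by
      obtain ⟨k, rfl⟩ := Nat.exists_eq_add_of_le' hk
      rw [Nat.add_sub_cancel]
      ring
    have hzero := hblock0 k hk (m - (k * (k - 1) + 1)) (by omega) (by omega)
    rw [Nat.add_sub_cancel' (by omega)] at hzero
    omega

theorem stmt_17 (a : ℕ → ℕ) (ha1 : a 1 = 3)
    (hblock0 : ∀ k, 1 ≤ k → ∀ j, 1 ≤ j → j ≤ 2 * k - 1 → a (k * (k - 1) + 1 + j) = 0)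
    (hblock1 : ∀ k, 1 ≤ k → a (k * (k + 1) + 1) = 1) :
    (∀ n, 1 ≤ n → AltLe (fun k => a (n + k)) a) ∧
    (∀ n, 2 ≤ n → a n = 0 → AltLt' (fun k => a (n + k)) a) := by
  have hshift : ∀ n, 1 ≤ n → AltLt' (fun k => a (n + k)) a := fun n hn =>
    altLt'_of_add_two_le <| by
      have := le_one_of_blocks hblock0 hblock1 (m := n + 1) (by omega)
      omega
  exact ⟨fun n hn => Or.inl (hshift n hn).altLt, fun n hn _ => hshift n (by omega)⟩
end

section
/- Let β > 1 with t_n = T_{-β}^n(-β/(β+1)) and (-β)-expansion digits a_n of -β/(β+1). If for some n, k ≥ 1 the digit string satisfies a_{n+1} ⋯ a_{n+2k} = 0^{2k-1} 1, then 0 < t_n < β^{-2k} · β²/(β+1) and -β^{-2k} · β³/(β+1) < t_{n+1} < 0. -/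
/-!
Writing `t (m + 1)` as the tail of the series for `t m` gives the digit recurrence
`t (m + 1) = -β t m - a (m + 1)`. Along the block of zero digits this yields
`t (n + j) = (-β)^j t n` for `j < 2k`, and the final digit `1` gives
`t (n + 2k) = β^(2k) t n - 1`. The lower end of the domain at `n + 2k` forces
`β^(2k) t n ≥ 1/(β+1) > 0`, and the upper end at `n + 2k - 2` gives
`β^(2k-2) t n < 1/(β+1)`.
-/

theorem eq_mul_sub_of_hasSum_digits {r : ℝ} (hr : r ≠ 0) {d t : ℕ → ℝ}
    (h : ∀ n, HasSum (fun k : ℕ => d (n + k + 1) / r ^ (k + 1)) (t n)) (m : ℕ) :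
    t (m + 1) = r * t m - d (m + 1) := by
  have htail : HasSum (fun k : ℕ => d (m + (k + 1) + 1) / r ^ (k + 1 + 1)) (t (m + 1) / r) := by
    have hshift : (fun k : ℕ => d (m + (k + 1) + 1) / r ^ (k + 1 + 1))
        = fun k : ℕ => d (m + 1 + k + 1) / r ^ (k + 1) / r := by
      funext k
      rw [show m + (k + 1) + 1 = m + 1 + k + 1 by omega, pow_succ, div_div]
    rw [hshift]
    exact (h (m + 1)).div_const r
  have hsplit := (hasSum_nat_add_iff (f := fun k : ℕ => d (m + k + 1) / r ^ (k + 1)) 1).mp htail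
  rw [(h m).unique hsplit, Finset.sum_range_one]
  field_simp
  ring

theorem eq_pow_mul_of_digits_eq_zero {r : ℝ} {d t : ℕ → ℝ}
    (hrec : ∀ m, t (m + 1) = r * t m - d (m + 1)) {n J : ℕ}
    (h0 : ∀ j, 1 ≤ j → j ≤ J → d (n + j) = 0) :
    ∀ j ≤ J, t (n + j) = r ^ j * t n := by
  intro j hj
  induction j with
  | zero => simp
  | succ j ih =>
    rw [← add_assoc, hrec, ih (by omega), add_assoc, h0 (j + 1) (by omega) hj]
    ring

theorem pos_and_lt_div_of_le_mul_sub_one {β B x : ℝ} (hβ : 0 < β) (hB : 0 < B)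
    (hlo : -β / (β + 1) ≤ B * β ^ 2 * x - 1) (hhi : B * x < 1 / (β + 1)) :
    0 < x ∧ x < β ^ 2 / ((β + 1) * (B * β ^ 2)) := by
  have hfrac : β / (β + 1) < 1 := (div_lt_one (by positivity)).mpr (by linarith)
  rw [neg_div] at hlo
  refine ⟨pos_of_mul_pos_right (a := B * β ^ 2) (by linarith) (by positivity), ?_⟩
  rw [lt_div_iff₀ (by positivity)] at hhi
  rw [lt_div_iff₀ (by positivity)]
  nlinarith [pow_pos hβ 2]

theorem stmt_18_general (β : ℝ) (hβ : 1 < β) (t : ℕ → ℝ) (a : ℕ → ℕ)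
    (hexp : ∀ n, HasSum (fun k : ℕ => (a (n + k + 1) : ℝ) / (-β) ^ (k + 1)) (t n))
    (hdom : ∀ n, t n ∈ Set.Ico (-β / (β + 1)) (1 / (β + 1)))
    (n k : ℕ) (hk : 1 ≤ k)
    (h0 : ∀ j, 1 ≤ j → j ≤ 2 * k - 1 → a (n + j) = 0) (h1 : a (n + 2 * k) = 1) :
    (0 < t n ∧ t n < β ^ 2 / ((β + 1) * β ^ (2 * k))) ∧
    (-(β ^ 3 / ((β + 1) * β ^ (2 * k))) < t (n + 1) ∧ t (n + 1) < 0) := by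
  have hβ0 : 0 < β := by linarith
  have hrec := eq_mul_sub_of_hasSum_digits (d := fun i => (a i : ℝ)) (neg_ne_zero.mpr hβ0.ne') hexp
  have hpow := eq_pow_mul_of_digits_eq_zero (d := fun i => (a i : ℝ)) hrec
    (n := n) (J := 2 * k - 1) (fun j hj₁ hj₂ => by simp [h0 j hj₁ hj₂])
  obtain ⟨k, rfl⟩ : ∃ k', k = k' + 1 := ⟨k - 1, by omega⟩
  have heven : t (n + 2 * k) = β ^ (2 * k) * t n := by
    rw [hpow _ (by omega), Even.neg_pow (by simp)]
  have hlast : t (n + 2 * (k + 1)) = β ^ (2 * k) * β ^ 2 * t n - 1 := by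
    rw [show n + 2 * (k + 1) = n + (2 * k + 1) + 1 by omega, hrec,
      show n + (2 * k + 1) + 1 = n + 2 * (k + 1) by omega, h1,
      hpow _ (by omega), Odd.neg_pow (by simp)]
    push_cast
    ring
  have hsucc : t (n + 1) = -β * t n := by simpa [h0 1 le_rfl (by omega)] using hrec n
  obtain ⟨hpos, hlt⟩ := pos_and_lt_div_of_le_mul_sub_one hβ0 (pow_pos hβ0 (2 * k))
    (hlast ▸ (hdom _).1) (heven ▸ (hdom _).2)
  rw [hsucc, show 2 * (k + 1) = 2 * k + 2 by ring, pow_add]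
  refine ⟨⟨hpos, hlt⟩, ?_, by nlinarith⟩
  rw [show β ^ 3 = β * β ^ 2 by ring, mul_div_assoc]
  nlinarith

theorem stmt_18 (β : ℝ) (hβ : 1 < β) (t : ℕ → ℝ) (a : ℕ → ℕ)
    (ht : ∀ n, t n = (Tm β)^[n] (-β / (β + 1)))
    (hexp : ∀ n, HasSum (fun k : ℕ => (a (n + k + 1) : ℝ) / (-β) ^ (k + 1)) (t n))
    (hdom : ∀ n, t n ∈ Set.Ico (-β / (β + 1)) (1 / (β + 1)))
    (n k : ℕ) (hk : 1 ≤ k)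
    (h0 : ∀ j, 1 ≤ j → j ≤ 2 * k - 1 → a (n + j) = 0) (h1 : a (n + 2 * k) = 1) :
    (0 < t n ∧ t n < β ^ 2 / ((β + 1) * β ^ (2 * k))) ∧
    (-(β ^ 3 / ((β + 1) * β ^ (2 * k))) < t (n + 1) ∧ t (n + 1) < 0) :=
  stmt_18_general β hβ t a hexp hdom n k hk h0 h1
end
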